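/- arXiv:1301.1722 — 5 statements merged into one kernel-verified Lean document; each statement's English description precedes it below -/
import Mathlib

section
/- Let x ∈ ℝ^p with ‖x‖ = ρ/√3 and let u be uniformly distributed on the unit sphere of ℝ^p. Define z = x + √(2/3)·ρ·P⊥u, where P⊥ is the orthogonal projection onto the hyperplane orthogonal to x. Then ‖z‖ ≤ ρ almost surely, E[z] = x, and E[z zᵀ] ⪰ (2ρ²/(3p))·I_p in the Loewner order. -/
open scoped RealInnerProductSpace
open MeasureTheory

namespace Stmt2Aux

variable {p : ℕ} {μ : Measure (EuclideanSpace ℝ (Fin p))} [IsProbabilityMeasure μ]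

lemma ae_norm_one (hsupp : μ (Metric.sphere (0 : EuclideanSpace ℝ (Fin p)) 1)ᶜ = 0) :
    ∀ᵐ u ∂μ, ‖u‖ = 1 := by
  have h : ∀ᵐ u ∂μ, u ∈ Metric.sphere (0 : EuclideanSpace ℝ (Fin p)) 1 := by
    rw [ae_iff]
    exact hsupp
  filter_upwards [h] with u hu
  simpa [Metric.mem_sphere, dist_zero_right] using hu

lemma integrable_of_cont_bounded {F : Type*} [NormedAddCommGroup F]
    (f : EuclideanSpace ℝ (Fin p) → F) (hf : Continuous f) (C : ℝ)
    (hb : ∀ᵐ u ∂μ, ‖f u‖ ≤ C) : Integrable f μ :=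
  ⟨hf.aestronglyMeasurable, HasFiniteIntegral.of_bounded hb⟩

lemma int_rot {G : Type*} [NormedAddCommGroup G] [NormedSpace ℝ G]
    (hrot : ∀ R : EuclideanSpace ℝ (Fin p) ≃ₗᵢ[ℝ] EuclideanSpace ℝ (Fin p), μ.map R = μ)
    (R : EuclideanSpace ℝ (Fin p) ≃ₗᵢ[ℝ] EuclideanSpace ℝ (Fin p))
    (f : EuclideanSpace ℝ (Fin p) → G) :
    ∫ u, f (R u) ∂μ = ∫ u, f u ∂μ := by
  conv_rhs => rw [← hrot R]
  have h : Measure.map (⇑R) μ = Measure.map (⇑R.toHomeomorph.toMeasurableEquiv) μ := rfl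
  rw [h, integral_map_equiv]
  rfl

lemma integral_id_zero
    (hrot : ∀ R : EuclideanSpace ℝ (Fin p) ≃ₗᵢ[ℝ] EuclideanSpace ℝ (Fin p), μ.map R = μ) :
    (∫ u, u ∂μ) = 0 := by
  have h1 := int_rot hrot (LinearIsometryEquiv.neg ℝ) (fun u => u)
  simp only [LinearIsometryEquiv.coe_neg] at h1
  rw [integral_neg] at h1
  have h2 : (2 : ℝ) • (∫ u, u ∂μ) = 0 := by
    rw [two_smul]
    nth_rewrite 1 [← h1]
    simp
  simpa using (smul_eq_zero.mp h2).resolve_left (by norm_num)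

lemma integral_inner_zero
    (hrot : ∀ R : EuclideanSpace ℝ (Fin p) ≃ₗᵢ[ℝ] EuclideanSpace ℝ (Fin p), μ.map R = μ)
    (w : EuclideanSpace ℝ (Fin p)) : (∫ u, ⟪u, w⟫ ∂μ) = 0 := by
  have h1 := int_rot hrot (LinearIsometryEquiv.neg ℝ) (fun u => ⟪u, w⟫)
  simp only [LinearIsometryEquiv.coe_neg, inner_neg_left] at h1
  rw [integral_neg] at h1
  linarith

lemma integrable_inner (hsupp : μ (Metric.sphere (0 : EuclideanSpace ℝ (Fin p)) 1)ᶜ = 0)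
    (w : EuclideanSpace ℝ (Fin p)) : Integrable (fun u => ⟪u, w⟫) μ := by
  refine integrable_of_cont_bounded _ (continuous_id.inner continuous_const) ‖w‖ ?_
  filter_upwards [ae_norm_one hsupp] with u hu
  calc ‖⟪u, w⟫‖ ≤ ‖u‖ * ‖w‖ := norm_inner_le_norm u w
  _ = ‖w‖ := by rw [hu, one_mul]

lemma integrable_inner_sq (hsupp : μ (Metric.sphere (0 : EuclideanSpace ℝ (Fin p)) 1)ᶜ = 0)
    (w : EuclideanSpace ℝ (Fin p)) : Integrable (fun u => ⟪u, w⟫ ^ 2) μ := by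
  refine integrable_of_cont_bounded _ ((continuous_id.inner continuous_const).pow 2)
    (‖w‖ ^ 2) ?_
  filter_upwards [ae_norm_one hsupp] with u hu
  have h := norm_inner_le_norm (𝕜 := ℝ) u w
  rw [hu, one_mul] at h
  rw [Real.norm_eq_abs, abs_pow, ← Real.norm_eq_abs]
  exact pow_le_pow_left₀ (norm_nonneg _) h 2

lemma hexp_aux (ρ P A V : ℝ) (hρ : ρ ≠ 0) (hP : P ≠ 0) :
    A + 2 / 3 * ρ ^ 2 * ((V - A / (ρ ^ 2 / 3)) / P) - 2 * ρ ^ 2 / (3 * P) * V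
      = A * (1 - 2 / P) := by
  field_simp
  ring

lemma moment2 (hp : 2 ≤ p)
    (hsupp : μ (Metric.sphere (0 : EuclideanSpace ℝ (Fin p)) 1)ᶜ = 0)
    (hrot : ∀ R : EuclideanSpace ℝ (Fin p) ≃ₗᵢ[ℝ] EuclideanSpace ℝ (Fin p), μ.map R = μ)
    (w : EuclideanSpace ℝ (Fin p)) : (∫ u, ⟪u, w⟫ ^ 2 ∂μ) = ‖w‖ ^ 2 / p := by
  set g : EuclideanSpace ℝ (Fin p) → ℝ := fun w => ∫ u, ⟪u, w⟫ ^ 2 ∂μ with hg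
  have hgR : ∀ (R : EuclideanSpace ℝ (Fin p) ≃ₗᵢ[ℝ] EuclideanSpace ℝ (Fin p)) w,
      g (R w) = g w := by
    intro R w
    have h1 := int_rot hrot R (fun u => ⟪u, R w⟫ ^ 2)
    simp only [R.inner_map_map] at h1
    simp only [hg]
    exact h1.symm
  have hscale : ∀ (t : ℝ) w, g (t • w) = t ^ 2 * g w := by
    intro t w
    simp only [hg, real_inner_smul_right, mul_pow]
    exact integral_const_mul _ _
  have hp0 : 0 < p := by omega
  set e₀ : EuclideanSpace ℝ (Fin p) := EuclideanSpace.single ⟨0, hp0⟩ 1 with he₀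
  have hunit : ∀ w : EuclideanSpace ℝ (Fin p), ‖w‖ = 1 → g w = g e₀ := by
    intro w hw
    have hn : ‖e₀‖ = ‖w‖ := by simp [he₀, hw]
    have h := hgR (Submodule.reflection (ℝ ∙ (e₀ - w))ᗮ) e₀
    rwa [Submodule.reflection_sub hn] at h
  have hsum : (p : ℝ) * g e₀ = 1 := by
    have h1 : ∀ i : Fin p, g (EuclideanSpace.single i 1) = g e₀ := fun i =>
      hunit _ (by simp)
    have h2 : ∑ i : Fin p, g (EuclideanSpace.single i 1) = 1 := by
      have hae : ∀ᵐ u ∂μ, (∑ i : Fin p, ⟪u, EuclideanSpace.single i (1 : ℝ)⟫ ^ 2) = 1 := by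
        filter_upwards [ae_norm_one hsupp] with u hu
        have h3 : ∀ i : Fin p, ⟪u, EuclideanSpace.single i (1 : ℝ)⟫ ^ 2 = ‖u i‖ ^ 2 := by
          intro i
          rw [EuclideanSpace.inner_single_right]
          simp [Real.norm_eq_abs, sq_abs]
        rw [Finset.sum_congr rfl fun i _ => h3 i]
        have h4 : ‖u‖ ^ 2 = ∑ i, ‖u i‖ ^ 2 := by
          rw [EuclideanSpace.norm_eq, Real.sq_sqrt (by positivity)]
        rw [← h4, hu, one_pow]
      simp only [hg]
      rw [← integral_finset_sum _ (fun i _ => integrable_inner_sq hsupp _),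
        integral_congr_ae hae, integral_const]
      simp
    rw [← h2]
    rw [Finset.sum_congr rfl fun i _ => h1 i, Finset.sum_const, Finset.card_univ,
      Fintype.card_fin, nsmul_eq_mul]
  rcases eq_or_ne w 0 with rfl | hw
  · simp [hg]
  · have hnw : ‖w‖ ≠ 0 := norm_ne_zero_iff.mpr hw
    have h1 : w = ‖w‖ • (‖w‖⁻¹ • w) := by
      rw [smul_smul, mul_inv_cancel₀ hnw, one_smul]
    have h2 : ‖(‖w‖⁻¹ • w)‖ = 1 := by
      rw [norm_smul, norm_inv, norm_norm, inv_mul_cancel₀ hnw]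
    have hp0' : (p : ℝ) ≠ 0 := by positivity
    calc g w = ‖w‖ ^ 2 * g (‖w‖⁻¹ • w) := by rw [← hscale]; rw [← h1]
    _ = ‖w‖ ^ 2 * g e₀ := by rw [hunit _ h2]
    _ = ‖w‖ ^ 2 / p := by
      have hge : g e₀ = 1 / p := by field_simp; linarith [hsum]
      rw [hge]
      ring

end Stmt2Aux



open scoped RealInnerProductSpace
open MeasureTheory

/-- For `x` with `‖x‖ = ρ/√3` and `u` uniform on the unit sphere (formalized as a
rotation-invariant probability measure supported on the unit sphere), the vector
`z = x + √(2/3)·ρ·P⊥u` satisfies `‖z‖ ≤ ρ` a.s., `E[z] = x`, and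
`E[z zᵀ] ⪰ (2ρ²/(3p))·I` (stated via quadratic forms). -/
theorem stmt2 (p : ℕ) (hp : 2 ≤ p) (ρ : ℝ) (hρ : 0 < ρ)
    (x : EuclideanSpace ℝ (Fin p)) (hx : ‖x‖ = ρ / Real.sqrt 3)
    (μ : Measure (EuclideanSpace ℝ (Fin p))) [IsProbabilityMeasure μ]
    (hsupp : μ (Metric.sphere (0 : EuclideanSpace ℝ (Fin p)) 1)ᶜ = 0)
    (hrot : ∀ R : EuclideanSpace ℝ (Fin p) ≃ₗᵢ[ℝ] EuclideanSpace ℝ (Fin p),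
      μ.map R = μ)
    (z : EuclideanSpace ℝ (Fin p) → EuclideanSpace ℝ (Fin p))
    (hz : ∀ u, z u = x + (Real.sqrt (2 / 3) * ρ) • (u - (⟪x, u⟫ / ‖x‖ ^ 2) • x)) :
    (∀ᵐ u ∂μ, ‖z u‖ ≤ ρ) ∧
    (∫ u, z u ∂μ) = x ∧
    (∀ v : EuclideanSpace ℝ (Fin p),
      (∫ u, ⟪z u, v⟫ ^ 2 ∂μ) ≥ (2 * ρ ^ 2 / (3 * p)) * ‖v‖ ^ 2) := by
  set c : ℝ := Real.sqrt (2 / 3) * ρ with hc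
  have hc0 : 0 ≤ c := mul_nonneg (Real.sqrt_nonneg _) hρ.le
  have hc2 : c ^ 2 = 2 / 3 * ρ ^ 2 := by
    rw [hc, mul_pow, Real.sq_sqrt (by norm_num)]
  have hx2 : ‖x‖ ^ 2 = ρ ^ 2 / 3 := by
    rw [hx, div_pow, Real.sq_sqrt (by norm_num)]
  have hx0 : ‖x‖ ≠ 0 := by rw [hx]; positivity
  have hx20 : ‖x‖ ^ 2 ≠ 0 := pow_ne_zero _ hx0
  have hpp : (0 : ℝ) < p := by positivity
  have hp2 : (2 : ℝ) ≤ (p : ℝ) := by exact_mod_cast hp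
  refine ⟨?_, ?_, ?_⟩
  · -- norm bound
    filter_upwards [Stmt2Aux.ae_norm_one hsupp] with u hu
    rw [hz u]
    set w : EuclideanSpace ℝ (Fin p) := u - (⟪x, u⟫ / ‖x‖ ^ 2) • x with hw
    have horth : ⟪x, w⟫ = 0 := by
      simp only [hw, inner_sub_right, real_inner_smul_right, real_inner_self_eq_norm_sq]
      field_simp
      ring
    have hns : ‖c • w‖ ^ 2 = c ^ 2 * ‖w‖ ^ 2 := by
      rw [norm_smul, Real.norm_eq_abs, mul_pow, sq_abs]
    have h1 : ‖x + c • w‖ ^ 2 = ‖x‖ ^ 2 + c ^ 2 * ‖w‖ ^ 2 := by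
      rw [norm_add_sq_real, real_inner_smul_right, horth, hns]
      ring
    have hwle : ‖w‖ ^ 2 ≤ 1 := by
      have hu2 : u = w + (⟪x, u⟫ / ‖x‖ ^ 2) • x := by rw [hw]; abel
      have h2 : ‖u‖ ^ 2 = ‖w‖ ^ 2 + 2 * ⟪w, (⟪x, u⟫ / ‖x‖ ^ 2) • x⟫ +
          ‖(⟪x, u⟫ / ‖x‖ ^ 2) • x‖ ^ 2 := by rw [← norm_add_sq_real, ← hu2]
      have h3 : ⟪w, (⟪x, u⟫ / ‖x‖ ^ 2) • x⟫ = 0 := by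
        rw [real_inner_smul_right, real_inner_comm x w, horth, mul_zero]
      rw [h3, hu, one_pow] at h2
      nlinarith [sq_nonneg ‖(⟪x, u⟫ / ‖x‖ ^ 2) • x‖]
    have h4 : ‖x + c • w‖ ^ 2 ≤ ρ ^ 2 := by
      rw [h1, hx2, hc2]
      nlinarith [sq_nonneg ρ]
    nlinarith [norm_nonneg (x + c • w)]
  · -- expectation
    have hzeq : ∀ u, z u = x + (c • u - ((c / ‖x‖ ^ 2) * ⟪u, x⟫) • x) := by
      intro u
      have hs : c * (⟪x, u⟫ / ‖x‖ ^ 2) = (c / ‖x‖ ^ 2) * ⟪u, x⟫ := by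
        rw [real_inner_comm u x]; ring
      rw [hz u, smul_sub, smul_smul, hs]
    have hintu : Integrable (fun u : EuclideanSpace ℝ (Fin p) => u) μ := by
      refine Stmt2Aux.integrable_of_cont_bounded _ continuous_id 1 ?_
      filter_upwards [Stmt2Aux.ae_norm_one hsupp] with u hu
      rw [hu]
    have hint1 : Integrable (fun u : EuclideanSpace ℝ (Fin p) => c • u) μ := hintu.smul c
    have hint2 : Integrable
        (fun u : EuclideanSpace ℝ (Fin p) => ((c / ‖x‖ ^ 2) * ⟪u, x⟫) • x) μ :=
      ((Stmt2Aux.integrable_inner hsupp x).const_mul _).smul_const x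
    calc (∫ u, z u ∂μ)
        = ∫ u, x + (c • u - ((c / ‖x‖ ^ 2) * ⟪u, x⟫) • x) ∂μ := by simp only [hzeq]
      _ = (∫ _, x ∂μ) + ∫ u, (c • u - ((c / ‖x‖ ^ 2) * ⟪u, x⟫) • x) ∂μ :=
          integral_add (integrable_const x) (hint1.sub hint2)
      _ = x := by
          rw [integral_sub hint1 hint2, integral_smul, integral_smul_const,
            integral_const_mul, Stmt2Aux.integral_id_zero hrot,
            Stmt2Aux.integral_inner_zero hrot, integral_const]
          simp
  · -- second moment bound
    intro v
    set a : ℝ := ⟪x, v⟫ with ha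
    set w : EuclideanSpace ℝ (Fin p) := v - (a / ‖x‖ ^ 2) • x with hw
    have horthw : ⟪x, w⟫ = 0 := by
      simp only [hw, inner_sub_right, real_inner_smul_right, real_inner_self_eq_norm_sq]
      rw [← ha]
      field_simp
      ring
    have hform : ∀ u, ⟪z u, v⟫ = a + c * ⟪u, w⟫ := by
      intro u
      rw [hz u]
      simp only [hw, inner_add_left, real_inner_smul_left, inner_sub_left, inner_sub_right,
        real_inner_smul_right]
      rw [real_inner_comm u x, ← ha]
      ring
    have hsq : ∀ u, ⟪z u, v⟫ ^ 2 =
        a ^ 2 + (2 * a * c) * ⟪u, w⟫ + c ^ 2 * ⟪u, w⟫ ^ 2 := by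
      intro u; rw [hform u]; ring
    have int1 : Integrable (fun u : EuclideanSpace ℝ (Fin p) =>
        a ^ 2 + (2 * a * c) * ⟪u, w⟫) μ :=
      (integrable_const _).add ((Stmt2Aux.integrable_inner hsupp w).const_mul _)
    have int2 : Integrable (fun u : EuclideanSpace ℝ (Fin p) =>
        c ^ 2 * ⟪u, w⟫ ^ 2) μ := (Stmt2Aux.integrable_inner_sq hsupp w).const_mul _
    have int3 : Integrable (fun u : EuclideanSpace ℝ (Fin p) =>
        (2 * a * c) * ⟪u, w⟫) μ := (Stmt2Aux.integrable_inner hsupp w).const_mul _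
    have hI : (∫ u, ⟪z u, v⟫ ^ 2 ∂μ) = a ^ 2 + c ^ 2 * (‖w‖ ^ 2 / p) := by
      simp only [hsq]
      rw [integral_add int1 int2, integral_add (integrable_const _) int3,
        integral_const, integral_const_mul, integral_const_mul,
        Stmt2Aux.integral_inner_zero hrot, Stmt2Aux.moment2 hp hsupp hrot w]
      simp
    have hvw : ‖v‖ ^ 2 = ‖w‖ ^ 2 + a ^ 2 / ‖x‖ ^ 2 := by
      have hv2 : v = w + (a / ‖x‖ ^ 2) • x := by rw [hw]; abel
      have h2 : ⟪w, (a / ‖x‖ ^ 2) • x⟫ = 0 := by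
        rw [real_inner_smul_right, real_inner_comm x w, horthw, mul_zero]
      have h3 : ‖(a / ‖x‖ ^ 2) • x‖ ^ 2 = a ^ 2 / ‖x‖ ^ 2 := by
        rw [norm_smul, Real.norm_eq_abs, mul_pow, sq_abs, div_pow]
        field_simp
      calc ‖v‖ ^ 2 = ‖w + (a / ‖x‖ ^ 2) • x‖ ^ 2 := by rw [← hv2]
        _ = ‖w‖ ^ 2 + a ^ 2 / ‖x‖ ^ 2 := by rw [norm_add_sq_real, h2, h3]; ring
    rw [ge_iff_le, hI]
    have hw2 : ‖w‖ ^ 2 = ‖v‖ ^ 2 - a ^ 2 / (ρ ^ 2 / 3) := by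
      rw [← hx2]; linarith [hvw]
    rw [hw2, hc2]
    have hρ0 : ρ ≠ 0 := hρ.ne'
    have hpne : (p : ℝ) ≠ 0 := hpp.ne'
    have hexp := Stmt2Aux.hexp_aux ρ (p : ℝ) (a ^ 2) (‖v‖ ^ 2) hρ0 hpne
    have hnn : 0 ≤ a ^ 2 * (1 - 2 / (p : ℝ)) :=
      mul_nonneg (sq_nonneg a) (by rw [sub_nonneg]; exact (div_le_one hpp).mpr hp2)
    linarith [hexp, hnn]
end

section
/- Let Σ be a symmetric p×p matrix with 0 ⪯ Σ ⪯ I_p/p, let x ∈ ℝ^p with ‖x‖ ≤ 1, σ > 0, and Σ' = (Σ⁻¹ + σ⁻²xxᵀ)⁻¹ (with the Sherman–Morrison convention when Σ is singular). Then Tr(Σ') ≤ Tr(Σ) − (p/(pσ² + 1))·xᵀΣ²x. -/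
open Matrix

lemma trace_aux (p : ℕ) (S : Matrix (Fin p) (Fin p) ℝ) (x : Fin p → ℝ) :
    (S * vecMulVec x x * S).trace = x ⬝ᵥ (S * S).mulVec x := by
  rw [Matrix.trace_mul_comm, ← Matrix.mul_assoc]
  simp only [Matrix.trace, Matrix.diag, Matrix.mul_apply, vecMulVec_apply, dotProduct, mulVec,
    Finset.mul_sum]
  exact Finset.sum_congr rfl fun i _ => Finset.sum_congr rfl fun j _ => by ring

/-- If `0 ⪯ S ⪯ I/p`, `‖x‖ ≤ 1`, `σ > 0`, and `S'` is the Sherman–Morrison update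
`S' = S − SxxᵀS/(σ² + xᵀSx)`, then `Tr(S') ≤ Tr(S) − (p/(pσ²+1))·xᵀS²x`. -/
theorem stmt4 (p : ℕ) (hp : 1 ≤ p) (S : Matrix (Fin p) (Fin p) ℝ)
    (hS : S.PosSemidef) (hSub : (((p : ℝ)⁻¹) • (1 : Matrix (Fin p) (Fin p) ℝ) - S).PosSemidef)
    (x : Fin p → ℝ) (hx : x ⬝ᵥ x ≤ 1) (σ : ℝ) (hσ : 0 < σ)
    (S' : Matrix (Fin p) (Fin p) ℝ)
    (hS' : S' = S - (σ ^ 2 + x ⬝ᵥ S.mulVec x)⁻¹ • (S * vecMulVec x x * S)) :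
    S'.trace ≤ S.trace - ((p : ℝ) / ((p : ℝ) * σ ^ 2 + 1)) * (x ⬝ᵥ (S * S).mulVec x) := by
  have hp0 : (0 : ℝ) < p := by exact_mod_cast hp
  set q : ℝ := x ⬝ᵥ S.mulVec x with hq
  set t : ℝ := x ⬝ᵥ (S * S).mulVec x with ht
  have hq0 : 0 ≤ q := by simpa using hS.dotProduct_mulVec_nonneg x
  have ht0 : 0 ≤ t := by
    have h2 : (S * S).PosSemidef := by
      have := hS.pow 2
      rwa [pow_two] at this
    simpa using h2.dotProduct_mulVec_nonneg x
  have hsub : 0 ≤ (p : ℝ)⁻¹ * (x ⬝ᵥ x) - q := by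
    have := hSub.dotProduct_mulVec_nonneg x
    simpa [Matrix.sub_mulVec, Matrix.smul_mulVec, dotProduct_sub, dotProduct_smul,
      smul_eq_mul] using this
  have hqle : q ≤ (p : ℝ)⁻¹ := by
    have h1 : (p : ℝ)⁻¹ * (x ⬝ᵥ x) ≤ (p : ℝ)⁻¹ := by
      have := mul_le_mul_of_nonneg_left hx (le_of_lt (inv_pos.mpr hp0))
      simpa using this
    linarith
  have hc0 : 0 < σ ^ 2 + q := by positivity
  have hd0 : 0 < (p : ℝ) * σ ^ 2 + 1 := by positivity
  have hkey : (p : ℝ) / ((p : ℝ) * σ ^ 2 + 1) ≤ (σ ^ 2 + q)⁻¹ := by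
    rw [div_le_iff₀ hd0, inv_eq_one_div, div_mul_eq_mul_div, le_div_iff₀ hc0]
    nlinarith [mul_le_mul_of_nonneg_left hqle hp0.le, mul_inv_cancel₀ hp0.ne']
  have htr : S'.trace = S.trace - (σ ^ 2 + q)⁻¹ * t := by
    rw [hS', Matrix.trace_sub, Matrix.trace_smul, trace_aux, smul_eq_mul]
  rw [htr]
  have : (p : ℝ) / ((p : ℝ) * σ ^ 2 + 1) * t ≤ (σ ^ 2 + q)⁻¹ * t :=
    mul_le_mul_of_nonneg_right hkey ht0
  linarith
end

section
/- Let x₁,…,x_{t−1} ∈ ℝ^p with ‖x_ℓ‖ ≤ 1 for all ℓ, and let Σ_t = (p·I_p + σ⁻²·Σ_{ℓ=1}^{t−1} x_ℓ x_ℓᵀ)⁻¹ with Δ = pσ². Then Tr(Σ_t²) ≥ (1/p)·exp(−2(t−1)/(pΔ)). -/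
open Matrix

lemma aux_quad {p : ℕ} (w v : Fin p → ℝ) :
    v ⬝ᵥ (vecMulVec w w *ᵥ v) = (w ⬝ᵥ v) ^ 2 := by
  have h : ∀ i, (vecMulVec w w *ᵥ v) i = w i * (w ⬝ᵥ v) := by
    intro i
    simp [mulVec, vecMulVec_apply, dotProduct, Finset.mul_sum, mul_assoc]
  calc v ⬝ᵥ (vecMulVec w w *ᵥ v) = ∑ i, v i * (w i * (w ⬝ᵥ v)) := by
        simp [dotProduct, h]
    _ = (∑ i, w i * v i) * (w ⬝ᵥ v) := by
        rw [Finset.sum_mul]; exact Finset.sum_congr rfl fun i _ => by ring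
    _ = (w ⬝ᵥ v) ^ 2 := by rw [← dotProduct]; ring

lemma aux_posdef (p t : ℕ) (hp : 1 ≤ p) (σ : ℝ) (hσ : 0 < σ)
    (x : Fin (t - 1) → (Fin p → ℝ)) :
    Matrix.PosDef ((p : ℝ) • (1 : Matrix (Fin p) (Fin p) ℝ)
        + (σ ^ 2)⁻¹ • ∑ ℓ, vecMulVec (x ℓ) (x ℓ)) := by
  have hp0 : (0:ℝ) < p := by exact_mod_cast hp
  have hσ2 : (0:ℝ) < σ ^ 2 := by positivity
  have : Nonempty (Fin p) := ⟨⟨0, hp⟩⟩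
  have h1 : Matrix.PosDef ((p : ℝ) • (1 : Matrix (Fin p) (Fin p) ℝ)) := by
    rw [Matrix.smul_one_eq_diagonal]
    exact Matrix.posDef_diagonal_iff.mpr fun i => hp0
  have h2 : Matrix.PosSemidef ((σ ^ 2)⁻¹ • ∑ ℓ, vecMulVec (x ℓ) (x ℓ)) := by
    rw [Matrix.posSemidef_iff_dotProduct_mulVec]
    constructor
    · ext i j
      simp [Matrix.conjTranspose_apply, Matrix.smul_apply, Matrix.sum_apply,
        vecMulVec_apply, mul_comm]
    · intro v
      have hcalc : star v ⬝ᵥ (((σ ^ 2)⁻¹ • ∑ ℓ, vecMulVec (x ℓ) (x ℓ)) *ᵥ v)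
          = (σ ^ 2)⁻¹ * ∑ ℓ, (x ℓ ⬝ᵥ v) ^ 2 := by
        rw [Matrix.smul_mulVec, dotProduct_smul]
        congr 1
        have hsum : (∑ ℓ, vecMulVec (x ℓ) (x ℓ)) *ᵥ v
            = ∑ ℓ, (vecMulVec (x ℓ) (x ℓ)) *ᵥ v := by
          ext i
          simp only [mulVec, dotProduct, Matrix.sum_apply, Finset.sum_mul, Finset.sum_apply]
          exact Finset.sum_comm
        rw [hsum]
        have hdot : star v ⬝ᵥ (∑ ℓ, (vecMulVec (x ℓ) (x ℓ)) *ᵥ v)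
            = ∑ ℓ, star v ⬝ᵥ ((vecMulVec (x ℓ) (x ℓ)) *ᵥ v) := by
          simp only [dotProduct, Finset.sum_apply, Finset.mul_sum]
          exact Finset.sum_comm
        rw [hdot]
        exact Finset.sum_congr rfl fun ℓ _ => by
          simpa using aux_quad (x ℓ) v
      rw [hcalc]
      positivity
  exact h1.add_posSemidef h2

lemma aux_spectral {p : ℕ} (M : Matrix (Fin p) (Fin p) ℝ) (hM : M.PosDef) :
    (M⁻¹ * M⁻¹).trace = ∑ i, ((hM.1.eigenvalues i)⁻¹) ^ 2 ∧
      M.trace = ∑ i, hM.1.eigenvalues i := by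
  classical
  set lam := hM.1.eigenvalues with hlam
  set U : Matrix (Fin p) (Fin p) ℝ := (hM.1.eigenvectorUnitary : Matrix (Fin p) (Fin p) ℝ) with hU
  have hUU : U * star U = 1 := (Matrix.mem_unitaryGroup_iff).mp (hM.1.eigenvectorUnitary).2
  have hUU' : star U * U = 1 := (Matrix.mem_unitaryGroup_iff').mp (hM.1.eigenvectorUnitary).2
  have hdiag : (RCLike.ofReal ∘ lam : Fin p → ℝ) = lam := by ext i; simp
  have hspec : M = U * Matrix.diagonal lam * star U := by
    have := hM.1.spectral_theorem
    rwa [hdiag] at this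
  have hne : ∀ i, lam i ≠ 0 := fun i => (hM.eigenvalues_pos i).ne'
  have hDD : Matrix.diagonal lam * Matrix.diagonal (fun i => (lam i)⁻¹) = 1 := by
    rw [Matrix.diagonal_mul_diagonal]
    have : (fun i => lam i * (lam i)⁻¹) = fun _ => (1:ℝ) :=
      funext fun i => mul_inv_cancel₀ (hne i)
    rw [this, Matrix.diagonal_one]
  have hMinv : M⁻¹ = U * Matrix.diagonal (fun i => (lam i)⁻¹) * star U := by
    apply Matrix.inv_eq_right_inv
    rw [hspec]
    simp only [Matrix.mul_assoc]
    rw [← Matrix.mul_assoc (star U) U, hUU', Matrix.one_mul,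
      ← Matrix.mul_assoc (Matrix.diagonal lam), hDD, Matrix.one_mul, hUU]
  have key : ∀ (d : Fin p → ℝ), (U * Matrix.diagonal d * star U).trace = ∑ i, d i := by
    intro d
    rw [Matrix.trace_mul_comm, ← Matrix.mul_assoc, hUU', Matrix.one_mul, Matrix.trace_diagonal]
  constructor
  · have h2 : M⁻¹ * M⁻¹ = U * Matrix.diagonal (fun i => (lam i)⁻¹ * (lam i)⁻¹) * star U := by
      rw [hMinv]
      simp only [Matrix.mul_assoc]
      rw [← Matrix.mul_assoc (star U) U, hUU', Matrix.one_mul,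
        ← Matrix.mul_assoc (Matrix.diagonal fun i => (lam i)⁻¹), Matrix.diagonal_mul_diagonal]
    rw [h2, key]
    exact Finset.sum_congr rfl fun i _ => (sq _).symm
  · rw [hspec, key]

/-- With `n = t−1` design vectors of norm at most 1 and posterior covariance
`Σ = (p·I + σ⁻²·Σ_ℓ x_ℓ x_ℓᵀ)⁻¹`, `Δ = pσ²`, one has
`Tr(Σ²) ≥ (1/p)·exp(−2n/(pΔ))`. -/
theorem stmt5 (p t : ℕ) (hp : 1 ≤ p) (ht : 1 ≤ t) (σ Δ : ℝ) (hσ : 0 < σ)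
    (hΔ : Δ = p * σ ^ 2)
    (x : Fin (t - 1) → (Fin p → ℝ)) (hx : ∀ ℓ, x ℓ ⬝ᵥ x ℓ ≤ 1)
    (S : Matrix (Fin p) (Fin p) ℝ)
    (hS : S = ((p : ℝ) • (1 : Matrix (Fin p) (Fin p) ℝ)
        + (σ ^ 2)⁻¹ • ∑ ℓ, vecMulVec (x ℓ) (x ℓ))⁻¹) :
    (S * S).trace ≥ (1 / (p : ℝ)) * Real.exp (-2 * ((t : ℝ) - 1) / ((p : ℝ) * Δ)) := by
  classical
  have hp0 : (0:ℝ) < p := by exact_mod_cast hp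
  have hσ2 : (0:ℝ) < σ ^ 2 := by positivity
  set M : Matrix (Fin p) (Fin p) ℝ :=
    (p : ℝ) • (1 : Matrix (Fin p) (Fin p) ℝ) + (σ ^ 2)⁻¹ • ∑ ℓ, vecMulVec (x ℓ) (x ℓ) with hMdef
  have hMpd : M.PosDef := aux_posdef p t hp σ hσ x
  obtain ⟨e1, e2⟩ := aux_spectral M hMpd
  set lam := hMpd.1.eigenvalues with hlam
  have hlpos : ∀ i, 0 < lam i := fun i => hMpd.eigenvalues_pos i
  set T : ℝ := ∑ i, lam i with hT
  have hTpos : 0 < T :=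
    Finset.sum_pos (fun i _ => hlpos i) ⟨⟨0, hp⟩, Finset.mem_univ _⟩
  set A : ℝ := ∑ i, (lam i)⁻¹ with hA
  have hApos : 0 < A :=
    Finset.sum_pos (fun i _ => inv_pos.mpr (hlpos i)) ⟨⟨0, hp⟩, Finset.mem_univ _⟩
  have hcast : ((t - 1 : ℕ) : ℝ) = (t:ℝ) - 1 := by
    rw [Nat.cast_sub ht, Nat.cast_one]
  have ht1 : (0:ℝ) ≤ (t:ℝ) - 1 := by
    rw [← hcast]; positivity
  -- trace bound
  have htrace : T ≤ (p:ℝ)^2 + ((t:ℝ) - 1) / σ ^ 2 := by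
    rw [← e2]
    have h0 : M.trace = (p:ℝ) * p + (σ ^ 2)⁻¹ * ∑ ℓ, (x ℓ ⬝ᵥ x ℓ) := by
      rw [hMdef, Matrix.trace_add, Matrix.trace_smul, Matrix.trace_smul, Matrix.trace_one,
        Matrix.trace_sum]
      have htr1 : ∀ ℓ, (vecMulVec (x ℓ) (x ℓ)).trace = x ℓ ⬝ᵥ x ℓ := fun ℓ => by
        simp [Matrix.trace, Matrix.diag, vecMulVec_apply, dotProduct]
      rw [Finset.sum_congr rfl fun ℓ _ => htr1 ℓ]
      simp [smul_eq_mul]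
    rw [h0]
    have hsum : ∑ ℓ, (x ℓ ⬝ᵥ x ℓ) ≤ ((t - 1 : ℕ) : ℝ) := by
      calc ∑ ℓ, (x ℓ ⬝ᵥ x ℓ) ≤ ∑ _ℓ : Fin (t-1), (1:ℝ) :=
            Finset.sum_le_sum fun ℓ _ => hx ℓ
        _ = ((t - 1 : ℕ) : ℝ) := by simp
    calc (p:ℝ) * p + (σ ^ 2)⁻¹ * ∑ ℓ, (x ℓ ⬝ᵥ x ℓ)
        ≤ (p:ℝ) * p + (σ ^ 2)⁻¹ * ((t:ℝ) - 1) := by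
          gcongr
          rw [← hcast]; exact hsum
      _ = (p:ℝ)^2 + ((t:ℝ) - 1) / σ ^ 2 := by ring
  -- Cauchy-Schwarz : p^2 ≤ T * A
  have hCS : ((p:ℝ))^2 ≤ T * A := by
    have h := Finset.sum_mul_sq_le_sq_mul_sq Finset.univ (fun i => Real.sqrt (lam i))
      (fun i => (Real.sqrt (lam i))⁻¹)
    have hfg : ∀ i ∈ Finset.univ, Real.sqrt (lam i) * (Real.sqrt (lam i))⁻¹ = (1:ℝ) :=
      fun i _ => mul_inv_cancel₀ (Real.sqrt_ne_zero'.mpr (hlpos i))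
    rw [Finset.sum_congr rfl hfg] at h
    simp only [Finset.sum_const, Finset.card_univ, Fintype.card_fin, nsmul_eq_mul,
      mul_one] at h
    calc ((p:ℝ))^2 ≤ _ := h
      _ = T * A := by
        congr 1
        · exact Finset.sum_congr rfl fun i _ => Real.sq_sqrt (hlpos i).le
        · exact Finset.sum_congr rfl fun i _ => by
            rw [inv_pow, Real.sq_sqrt (hlpos i).le]
  -- Chebyshev : A^2 ≤ p * ∑ (lam i)⁻¹ ^ 2
  have hCheb : A^2 ≤ (p:ℝ) * ∑ i, ((lam i)⁻¹)^2 := by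
    have := sq_sum_le_card_mul_sum_sq (s := (Finset.univ : Finset (Fin p)))
      (f := fun i => (lam i)⁻¹)
    simpa [hA] using this
  -- main chain of inequalities
  rw [ge_iff_le, hS, e1]
  set c : ℝ := ((t:ℝ) - 1) / ((p:ℝ)^2 * σ ^ 2) with hc
  have hc0 : 0 ≤ c := by positivity
  have hexp : -2 * ((t : ℝ) - 1) / ((p : ℝ) * Δ) = -(2*c) := by
    rw [hΔ, hc, show (p:ℝ)*((p:ℝ)*σ^2) = (p:ℝ)^2*σ^2 from by ring, neg_mul, neg_div,
      mul_div_assoc]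
  have hTexp : T ≤ (p:ℝ)^2 * Real.exp c := by
    calc T ≤ (p:ℝ)^2 + ((t:ℝ) - 1) / σ ^ 2 := htrace
      _ = (p:ℝ)^2 * (1 + c) := by rw [hc]; field_simp
      _ ≤ (p:ℝ)^2 * Real.exp c := by
          gcongr
          linarith [Real.add_one_le_exp c]
  have he1 : Real.exp (-(2*c)) * (Real.exp c)^2 = 1 := by
    rw [sq, ← Real.exp_add, ← Real.exp_add, show -(2*c) + (c + c) = 0 by ring, Real.exp_zero]
  have hstep1 : (1 / (p : ℝ)) * Real.exp (-2 * ((t : ℝ) - 1) / ((p : ℝ) * Δ))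
      ≤ (p:ℝ)^3 / T^2 := by
    rw [hexp, div_mul_eq_mul_div, one_mul, div_le_div_iff₀ hp0 (by positivity)]
    have h1 : T^2 ≤ ((p:ℝ)^2 * Real.exp c)^2 :=
      pow_le_pow_left₀ hTpos.le hTexp 2
    calc Real.exp (-(2*c)) * T^2
        ≤ Real.exp (-(2*c)) * ((p:ℝ)^2 * Real.exp c)^2 :=
          mul_le_mul_of_nonneg_left h1 (Real.exp_pos _).le
      _ = (p:ℝ)^4 * (Real.exp (-(2*c)) * (Real.exp c)^2) := by ring
      _ = (p:ℝ)^3 * (p:ℝ) := by rw [he1]; ring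
  have hstep2 : (p:ℝ)^3 / T^2 ≤ A^2 / (p:ℝ) := by
    rw [div_le_div_iff₀ (by positivity) hp0]
    nlinarith [pow_le_pow_left₀ (by positivity : (0:ℝ) ≤ (p:ℝ)^2) hCS 2]
  have hstep3 : A^2 / (p:ℝ) ≤ ∑ i, ((lam i)⁻¹)^2 := by
    rw [div_le_iff₀ hp0]
    linarith [hCheb]
  exact le_trans hstep1 (le_trans hstep2 hstep3)
end

section
/- Let W be a nonnegative random variable such that P(W² ≥ (8(t−1)/(pΔ))·ν²) ≤ exp(−(ν−1)²/3) for all ν ≥ 1, and suppose E[W²] ≥ C·(t−1)/p with C > 0. Then for α = 1 + √(3·log(96/(ΔC))) one has E[W] ≥ ((C/α)·√(Δ/8) − (6/α)·√(8/Δ)·exp(−(α−1)²/3))·√((t−1)/p), and if additionally α ≥ 2 this lower bound is at least (C/(2α))·√(Δ/8)·√((t−1)/p). -/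
open MeasureTheory
open scoped ProbabilityTheory
open Filter Set Topology

lemma tail_int_bound {Ω : Type*} [MeasureSpace Ω] [IsProbabilityMeasure (ℙ : Measure Ω)]
    (W : Ω → ℝ) (hWmeas : Measurable W)
    (hWint : Integrable (fun ω => W ω ^ 2))
    (K b : ℝ) (hK : 0 < K) (hb : 2 ≤ b)
    (htail : ∀ ν : ℝ, 1 ≤ ν →
      ℙ {ω | K * ν ^ 2 ≤ W ω ^ 2} ≤ ENNReal.ofReal (Real.exp (-(ν - 1) ^ 2 / 3))) :
    (∫ ω, max (W ω ^ 2 - K * b ^ 2) 0) ≤ 6 * K * Real.exp (-(b - 1) ^ 2 / 3) := by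
  have hb0 : 0 < b := by linarith
  set a := K * b ^ 2 with ha
  have ha0 : 0 < a := by positivity
  have hg_int : Integrable (fun ω => max (W ω ^ 2 - a) 0) :=
    (hWint.sub (integrable_const a)).pos_part
  have hg_nn : 0 ≤ᵐ[ℙ] fun ω => max (W ω ^ 2 - a) 0 :=
    Filter.Eventually.of_forall fun ω => le_max_right _ _
  rw [hg_int.integral_eq_integral_meas_lt hg_nn]
  set ν : ℝ → ℝ := fun s => Real.sqrt ((a + s) / K) with hν
  have hν_ge : ∀ s : ℝ, 0 ≤ s → b ≤ ν s := by
    intro s hs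
    have h1 : b = Real.sqrt (b ^ 2) := (Real.sqrt_sq hb0.le).symm
    rw [h1]
    apply Real.sqrt_le_sqrt
    rw [le_div_iff₀ hK]
    nlinarith
  have hν_pos : ∀ s : ℝ, 0 ≤ s → 0 < ν s := fun s hs => lt_of_lt_of_le hb0 (hν_ge s hs)
  set Φ : ℝ → ℝ := fun s => -(6 * K) * Real.exp (-(ν s - 1) ^ 2 / 3) with hΦ
  set D : ℝ → ℝ := fun s =>
    (6 * K) * (Real.exp (-(ν s - 1) ^ 2 / 3) * ((ν s - 1) / (3 * K * ν s))) with hD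
  have hderiv : ∀ s ∈ Ici (0:ℝ), HasDerivAt Φ (D s) s := by
    intro s hs
    have hs0 : (0:ℝ) ≤ s := hs
    have hpos : 0 < (a + s) / K := div_pos (by linarith) hK
    have h1 : HasDerivAt (fun x : ℝ => (a + x) / K) (1 / K) s := by
      simpa using ((hasDerivAt_id s).const_add a).div_const K
    have h2 : HasDerivAt ν (1 / (2 * ν s) * (1 / K)) s := by
      have := (Real.hasDerivAt_sqrt hpos.ne').comp s h1
      exact this
    have h3 : HasDerivAt (fun x : ℝ => -(ν x - 1) ^ 2 / 3)
        (-(2 * (ν s - 1) * (1 / (2 * ν s) * (1 / K))) / 3) s := by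
      have h := (((h2.sub_const 1).pow 2).neg).div_const 3
      refine h.congr_deriv ?_
      ring
    have hνs : ν s ≠ 0 := (hν_pos s hs0).ne'
    have hval : -(2 * (ν s - 1) * (1 / (2 * ν s) * (1 / K))) / 3
        = -((ν s - 1) / (3 * K * ν s)) := by
      field_simp
    rw [hval] at h3
    have h4 := (h3.exp).const_mul (-(6 * K))
    refine h4.congr_deriv ?_
    simp only [hD]
    ring
  have hD_nonneg : ∀ s ∈ Ioi (0:ℝ), 0 ≤ D s := by
    intro s hs
    have h1 : 2 ≤ ν s := le_trans hb (hν_ge s (le_of_lt hs))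
    have h2 : 0 < ν s := by linarith
    have h3 : (0:ℝ) ≤ ν s - 1 := by linarith
    have := Real.exp_nonneg (-(ν s - 1) ^ 2 / 3)
    positivity
  have hΦtend : Tendsto Φ atTop (𝓝 0) := by
    have hinner : Tendsto (fun s : ℝ => (ν s - 1) ^ 2 / 3) atTop atTop := by
      have hf : Tendsto (fun s : ℝ => (a + s) / (12 * K)) atTop atTop := by
        apply Tendsto.atTop_div_const (by positivity)
        exact tendsto_atTop_add_const_left _ _ tendsto_id
      apply tendsto_atTop_mono' atTop ?_ hf
      filter_upwards [eventually_ge_atTop (0:ℝ)] with s hs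
      have h1 : 2 ≤ ν s := le_trans hb (hν_ge s hs)
      have h2 : (ν s) ^ 2 = (a + s) / K := Real.sq_sqrt (by positivity)
      have h5 : a + s = K * (ν s) ^ 2 := by rw [h2]; field_simp
      have h3 : ν s / 2 ≤ ν s - 1 := by linarith
      have h4 : (ν s / 2) ^ 2 ≤ (ν s - 1) ^ 2 := by nlinarith
      rw [h5, div_le_div_iff₀ (by positivity) (by norm_num)]
      nlinarith
    have h0 : Tendsto (fun s : ℝ => Real.exp (-(ν s - 1) ^ 2 / 3)) atTop (𝓝 0) := by
      have h := Real.tendsto_exp_neg_atTop_nhds_zero.comp hinner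
      have heq : ((fun x => Real.exp (-x)) ∘ fun s : ℝ => (ν s - 1) ^ 2 / 3)
          = fun s : ℝ => Real.exp (-(ν s - 1) ^ 2 / 3) := by
        funext s; simp [Function.comp, neg_div]
      rwa [heq] at h
    have h1 := h0.const_mul (-(6 * K))
    rw [mul_zero] at h1
    exact h1
  have hDint : IntegrableOn D (Ioi (0:ℝ)) :=
    integrableOn_Ioi_deriv_of_nonneg' hderiv hD_nonneg hΦtend
  have hDval : ∫ s in Ioi (0:ℝ), D s = 0 - Φ 0 :=
    integral_Ioi_of_hasDerivAt_of_nonneg' hderiv hD_nonneg hΦtend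
  have hν0 : ν 0 = b := by
    have h : (a + 0) / K = b ^ 2 := by rw [ha]; field_simp; ring
    show Real.sqrt ((a + 0) / K) = b
    rw [h, Real.sqrt_sq hb0.le]
  have hΦ0 : 0 - Φ 0 = 6 * K * Real.exp (-(b - 1) ^ 2 / 3) := by
    have h : Φ 0 = -(6 * K) * Real.exp (-(b - 1) ^ 2 / 3) := by
      show -(6 * K) * Real.exp (-(ν 0 - 1) ^ 2 / 3) = _
      rw [hν0]
    rw [h]; ring
  have hbound : ∀ s ∈ Ioi (0:ℝ),
      (ℙ {ω | s < max (W ω ^ 2 - a) 0}).toReal ≤ D s := by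
    intro s hs
    have hs0 : (0:ℝ) < s := hs
    have hνs2 : 2 ≤ ν s := le_trans hb (hν_ge s hs0.le)
    have hνpos : 0 < ν s := by linarith
    have hsq : K * (ν s) ^ 2 = a + s := by
      have h : (ν s) ^ 2 = (a + s) / K := Real.sq_sqrt (by positivity)
      rw [h]; field_simp
    have hsub : {ω | s < max (W ω ^ 2 - a) 0} ⊆ {ω | K * (ν s) ^ 2 ≤ W ω ^ 2} := by
      intro ω hω
      simp only [Set.mem_setOf_eq] at hω ⊢
      rw [hsq]
      rcases max_cases (W ω ^ 2 - a) 0 with ⟨h1, _⟩ | ⟨h1, _⟩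
      · rw [h1] at hω; linarith
      · rw [h1] at hω; linarith
    have hmeas := (measure_mono hsub).trans (htail (ν s) (by linarith))
    have h1 : (ℙ {ω | s < max (W ω ^ 2 - a) 0}).toReal ≤ Real.exp (-(ν s - 1) ^ 2 / 3) :=
      ENNReal.toReal_le_of_le_ofReal (Real.exp_nonneg _) hmeas
    refine h1.trans ?_
    rw [hD]; simp only []
    have hcoef : 1 ≤ 6 * K * ((ν s - 1) / (3 * K * ν s)) := by
      rw [← mul_div_assoc, le_div_iff₀ (by positivity : (0:ℝ) < 3 * K * ν s)]
      nlinarith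
    calc Real.exp (-(ν s - 1) ^ 2 / 3)
        = 1 * Real.exp (-(ν s - 1) ^ 2 / 3) := (one_mul _).symm
      _ ≤ (6 * K * ((ν s - 1) / (3 * K * ν s))) * Real.exp (-(ν s - 1) ^ 2 / 3) :=
          mul_le_mul_of_nonneg_right hcoef (Real.exp_nonneg _)
      _ = 6 * K * (Real.exp (-(ν s - 1) ^ 2 / 3) * ((ν s - 1) / (3 * K * ν s))) := by ring
  have hmble : Measurable (fun s : ℝ => (ℙ {ω | s < max (W ω ^ 2 - a) 0}).toReal) := by
    apply Measurable.ennreal_toReal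
    apply Antitone.measurable
    intro s u hsu
    exact measure_mono fun ω hω => lt_of_le_of_lt hsu hω
  have hint : IntegrableOn (fun s : ℝ => (ℙ {ω | s < max (W ω ^ 2 - a) 0}).toReal)
      (Ioi (0:ℝ)) := by
    apply Integrable.mono' hDint hmble.aestronglyMeasurable.restrict
    rw [ae_restrict_iff' measurableSet_Ioi]
    filter_upwards with s hs
    rw [Real.norm_of_nonneg ENNReal.toReal_nonneg]
    exact hbound s hs
  calc ∫ s in Ioi (0:ℝ), (ℙ {ω | s < max (W ω ^ 2 - a) 0}).toReal
      ≤ ∫ s in Ioi (0:ℝ), D s := setIntegral_mono_on hint hDint measurableSet_Ioi hbound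
    _ = 0 - Φ 0 := hDval
    _ = 6 * K * Real.exp (-(b - 1) ^ 2 / 3) := hΦ0

set_option maxHeartbeats 2000000 in
/-- Sub-Gaussian tail plus second-moment lower bound give a first-moment lower bound. -/
theorem stmt9 {Ω : Type*} [MeasureSpace Ω] [IsProbabilityMeasure (ℙ : Measure Ω)]
    (p t : ℕ) (hp : 1 ≤ p) (ht : 2 ≤ t) (Δ C : ℝ) (hΔ : 0 < Δ)
    (hC : 0 < C) (hC1 : C ≤ 1)
    (W : Ω → ℝ) (hW0 : ∀ ω, 0 ≤ W ω) (hWmeas : Measurable W)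
    (hWint : Integrable (fun ω => W ω ^ 2))
    (htail : ∀ ν : ℝ, 1 ≤ ν →
      ℙ {ω | (8 * ((t : ℝ) - 1) / ((p : ℝ) * Δ)) * ν ^ 2 ≤ W ω ^ 2}
        ≤ ENNReal.ofReal (Real.exp (-(ν - 1) ^ 2 / 3)))
    (hmom : (∫ ω, W ω ^ 2) ≥ C * ((t : ℝ) - 1) / p) :
    ∀ α : ℝ, α = 1 + Real.sqrt (3 * Real.log (96 / (Δ * C))) →
      ((∫ ω, W ω) ≥ ((C / α) * Real.sqrt (Δ / 8)
          - (6 / α) * Real.sqrt (8 / Δ) * Real.exp (-(α - 1) ^ 2 / 3))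
          * Real.sqrt (((t : ℝ) - 1) / p)) ∧
      (2 ≤ α →
        (∫ ω, W ω) ≥ (C / (2 * α)) * Real.sqrt (Δ / 8) * Real.sqrt (((t : ℝ) - 1) / p)) := by
  intro α hα
  have hp0 : (0:ℝ) < p := by exact_mod_cast Nat.lt_of_lt_of_le Nat.zero_lt_one hp
  have ht2 : (2:ℝ) ≤ (t:ℝ) := by exact_mod_cast ht
  have ht1 : (1:ℝ) ≤ (t:ℝ) - 1 := by linarith
  set θ : ℝ := ((t:ℝ) - 1) / p with hθdef
  have hθ : 0 < θ := div_pos (by linarith) hp0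
  set K : ℝ := 8 * ((t:ℝ) - 1) / ((p:ℝ) * Δ) with hKdef
  have hK : 0 < K := div_pos (by linarith) (by positivity)
  have hKθ : K = 8 / Δ * θ := by
    rw [hKdef, hθdef]; field_simp
  have hmomθ : C * θ ≤ ∫ ω, W ω ^ 2 := by
    rw [hθdef, ← mul_div_assoc]; exact hmom
  clear_value θ K
  clear hmom hKdef hθdef
  have hLpos : (0:ℝ) < 96 / (Δ * C) := by positivity
  have hWint1 : Integrable W := by
    apply Integrable.mono' (hWint.add (integrable_const 1)) hWmeas.aestronglyMeasurable
    filter_upwards with ω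
    simp only [Pi.add_apply]
    rw [Real.norm_of_nonneg (hW0 ω)]
    nlinarith [hW0 ω, sq_nonneg (W ω - 1)]
  have hmom' : C * θ ≤ ∫ ω, W ω ^ 2 := hmomθ
  by_cases hα2 : 2 ≤ α
  · -- main case
    have hα0 : 0 < α := by linarith
    have hbnd := tail_int_bound W hWmeas hWint K α hK hα2 htail
    obtain ⟨e, he⟩ : ∃ e : ℝ, e = Real.exp (-(α - 1) ^ 2 / 3) := ⟨_, rfl⟩
    rw [← he] at hbnd
    have he0 : 0 ≤ e := he ▸ Real.exp_nonneg _
    have hL : 1 ≤ 3 * Real.log (96 / (Δ * C)) := by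
      by_contra h
      push_neg at h
      have hlt : Real.sqrt (3 * Real.log (96 / (Δ * C))) < 1 := by
        rcases le_or_gt (3 * Real.log (96 / (Δ * C))) 0 with h0 | h0
        · rw [Real.sqrt_eq_zero'.mpr h0]; norm_num
        · calc Real.sqrt (3 * Real.log (96 / (Δ * C))) < Real.sqrt 1 :=
              Real.sqrt_lt_sqrt h0.le h
            _ = 1 := Real.sqrt_one
      rw [hα] at hα2
      linarith
    have heval : e = Δ * C / 96 := by
      have h1 : (α - 1) ^ 2 = 3 * Real.log (96 / (Δ * C)) := by
        rw [hα]
        simp only [add_sub_cancel_left]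
        exact Real.sq_sqrt (by linarith)
      rw [he, h1]
      have h2 : -(3 * Real.log (96 / (Δ * C))) / 3 = -Real.log (96 / (Δ * C)) := by ring
      rw [h2, Real.exp_neg, Real.exp_log hLpos]
      field_simp
    have hg_int : Integrable (fun ω => max (W ω ^ 2 - K * α ^ 2) 0) :=
      (hWint.sub (integrable_const _)).pos_part
    have hsqrtK : 0 < Real.sqrt K := Real.sqrt_pos.mpr hK
    have hsKα : Real.sqrt (K * α ^ 2) = Real.sqrt K * α := by
      rw [Real.sqrt_mul hK.le, Real.sqrt_sq hα0.le]
    have hpt : ∀ ω, W ω ^ 2 ≤ α * Real.sqrt K * W ω + max (W ω ^ 2 - K * α ^ 2) 0 := by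
      intro ω
      have hsqK : Real.sqrt K ^ 2 = K := Real.sq_sqrt hK.le
      by_cases h : W ω ^ 2 ≤ K * α ^ 2
      · have hWle : W ω ≤ Real.sqrt K * α := by
          have h2 := Real.sqrt_le_sqrt h
          rwa [Real.sqrt_sq (hW0 ω), hsKα] at h2
        have hmax : 0 ≤ max (W ω ^ 2 - K * α ^ 2) 0 := le_max_right _ _
        nlinarith [hW0 ω]
      · push_neg at h
        have hWge : Real.sqrt K * α ≤ W ω := by
          have h2 := Real.sqrt_le_sqrt h.le
          rwa [Real.sqrt_sq (hW0 ω), hsKα] at h2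
        have hmax : max (W ω ^ 2 - K * α ^ 2) 0 = W ω ^ 2 - K * α ^ 2 :=
          max_eq_left (by linarith)
        have hmm := mul_le_mul_of_nonneg_left hWge
          (mul_nonneg hα0.le (Real.sqrt_nonneg K))
        nlinarith [hW0 ω, hmm, hsqK]
    have key1 : (∫ ω, W ω ^ 2) ≤ α * Real.sqrt K * (∫ ω, W ω) + 6 * K * e := by
      calc (∫ ω, W ω ^ 2)
          ≤ ∫ ω, (α * Real.sqrt K * W ω + max (W ω ^ 2 - K * α ^ 2) 0) :=
            integral_mono hWint ((hWint1.const_mul _).add hg_int) hpt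
        _ = α * Real.sqrt K * (∫ ω, W ω) + ∫ ω, max (W ω ^ 2 - K * α ^ 2) 0 := by
            rw [integral_add (hWint1.const_mul _) hg_int, integral_const_mul]
        _ ≤ α * Real.sqrt K * (∫ ω, W ω) + 6 * K * e := by linarith [hbnd]
    have key2 : C * θ - 6 * K * e ≤ α * Real.sqrt K * (∫ ω, W ω) := by linarith
    clear key1 hbnd hpt hg_int hWint hWint1 htail hmom' hmomθ
    set q : ℝ := Real.sqrt (8 / Δ) with hq
    set r : ℝ := Real.sqrt (Δ / 8) with hr
    set s : ℝ := Real.sqrt θ with hs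
    have hq0 : 0 < q := Real.sqrt_pos.mpr (by positivity)
    have hs0 : 0 < s := Real.sqrt_pos.mpr hθ
    have hq2 : q ^ 2 = 8 / Δ := Real.sq_sqrt (by positivity)
    have hs2 : s ^ 2 = θ := Real.sq_sqrt hθ.le
    have hrq : r * q = 1 := by
      rw [hr, hq, ← Real.sqrt_mul (by positivity)]
      rw [show Δ / 8 * (8 / Δ) = 1 by field_simp]
      exact Real.sqrt_one
    have hsK : Real.sqrt K = q * s := by
      rw [hKθ, hq, hs, ← Real.sqrt_mul (by positivity)]
    clear_value q r s
    have hr8 : r = Δ / 8 * q := by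
      have h1 : q * (Δ / 8 * q) = 1 := by
        rw [show q * (Δ / 8 * q) = Δ / 8 * q ^ 2 from by ring, hq2]
        field_simp
      have h2 : q * r = 1 := by rw [mul_comm]; exact hrq
      exact mul_left_cancel₀ hq0.ne' (h2.trans h1.symm)
    have hmul : (C * r - 6 * q * e) * s * (q * s) = C * θ - 6 * (8 / Δ * θ) * e := by
      linear_combination C * s ^ 2 * hrq - 6 * e * s ^ 2 * hq2 + (C - 48 * e / Δ) * hs2
    have claim1 : (∫ ω, W ω) ≥ ((C / α) * r - (6 / α) * q * e) * s := by
      have hqs : 0 < q * s := mul_pos hq0 hs0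
      have h1 : (C * r - 6 * q * e) * s * (q * s) ≤ ((∫ ω, W ω) * α) * (q * s) := by
        rw [hmul, ← hKθ]
        calc C * θ - 6 * K * e ≤ α * Real.sqrt K * (∫ ω, W ω) := key2
          _ = ((∫ ω, W ω) * α) * (q * s) := by rw [hsK]; ring
      have h2 : (C * r - 6 * q * e) * s ≤ (∫ ω, W ω) * α :=
        le_of_mul_le_mul_right h1 hqs
      have h3 : ((C / α) * r - (6 / α) * q * e) * s = ((C * r - 6 * q * e) * s) / α := by
        ring
      rw [ge_iff_le, h3, div_le_iff₀ hα0]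
      exact h2
    rw [← he]
    refine ⟨claim1, fun _ => ?_⟩
    have heq2 : (C / (2 * α)) * r * s = ((C / α) * r - (6 / α) * q * e) * s := by
      rw [heval, hr8]
      ring
    rw [ge_iff_le, heq2]
    exact claim1
  · -- contradictory hypotheses
    exfalso
    push_neg at hα2
    have hL : 3 * Real.log (96 / (Δ * C)) < 1 := by
      by_contra h
      push_neg at h
      have h1 : (1:ℝ) ≤ Real.sqrt (3 * Real.log (96 / (Δ * C))) := by
        rw [show (1:ℝ) = Real.sqrt 1 from Real.sqrt_one.symm]
        exact Real.sqrt_le_sqrt h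
      rw [hα] at hα2
      linarith
    have hlog : Real.log (96 / (Δ * C)) < 1/3 := by linarith
    have h96 : 96 / (Δ * C) < Real.exp (1/3) := by
      calc 96 / (Δ * C) = Real.exp (Real.log (96 / (Δ * C))) := (Real.exp_log hLpos).symm
        _ < Real.exp (1/3) := Real.exp_lt_exp.mpr hlog
    have h96' : 96 < Real.exp (1/3) * (Δ * C) := by
      rwa [div_lt_iff₀ (by positivity : (0:ℝ) < Δ * C)] at h96
    obtain ⟨x, hx⟩ : ∃ x : ℝ, x = Real.exp (-(2 - 1:ℝ) ^ 2 / 3) := ⟨_, rfl⟩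
    have hxpos : 0 < x := hx ▸ Real.exp_pos _
    have hxe : x * Real.exp (1/3) = 1 := by
      rw [hx, ← Real.exp_add]; norm_num
    -- exp(1/3) < 3/2
    have hcube : Real.exp ((1:ℝ)/3) ^ (3:ℕ) = Real.exp 1 := by
      rw [← Real.exp_nat_mul]; norm_num
    have hexp1 : Real.exp 1 < 3.375 := lt_trans Real.exp_one_lt_d9 (by norm_num)
    have h32 : Real.exp ((1:ℝ)/3) < 3/2 := by
      apply lt_of_pow_lt_pow_left₀ 3 (by norm_num : (0:ℝ) ≤ 3/2)
      rw [hcube, show ((3:ℝ)/2) ^ (3:ℕ) = 27/8 from by norm_num]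
      linarith [hexp1]
    have hx23 : 2/3 < x := by nlinarith [h32, hxe, Real.exp_pos ((1:ℝ)/3)]
    have hΔC : 96 * x < Δ * C := by nlinarith [h96', hxe, hxpos]
    -- second moment upper bound
    have hbnd := tail_int_bound W hWmeas hWint K 2 hK le_rfl htail
    rw [← hx] at hbnd
    have hg_int : Integrable (fun ω => max (W ω ^ 2 - K * 2 ^ 2) 0) :=
      (hWint.sub (integrable_const _)).pos_part
    have hpt : ∀ ω, W ω ^ 2 ≤ K * 2 ^ 2 + max (W ω ^ 2 - K * 2 ^ 2) 0 := by
      intro ω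
      have hmax := le_max_left (W ω ^ 2 - K * 2 ^ 2) 0
      linarith
    have hup : (∫ ω, W ω ^ 2) ≤ K * 2 ^ 2 + 6 * K * x := by
      calc (∫ ω, W ω ^ 2) ≤ ∫ ω, (K * 2 ^ 2 + max (W ω ^ 2 - K * 2 ^ 2) 0) :=
            integral_mono hWint ((integrable_const _).add hg_int) hpt
        _ = K * 2 ^ 2 + ∫ ω, max (W ω ^ 2 - K * 2 ^ 2) 0 := by
            rw [integral_add (integrable_const _) hg_int, integral_const]
            simp
        _ ≤ K * 2 ^ 2 + 6 * K * x := by linarith [hbnd]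
    have hchain : C * θ ≤ 4 * K + 6 * K * x := by linarith [hmom', hup]
    have hKΔ : K * Δ = 8 * θ := by rw [hKθ]; field_simp
    have h1 : C * θ * Δ ≤ (4 * K + 6 * K * x) * Δ :=
      mul_le_mul_of_nonneg_right hchain hΔ.le
    have h2 : (4 * K + 6 * K * x) * Δ = (32 + 48 * x) * θ := by
      linear_combination (4 + 6 * x) * hKΔ
    have h3 : (Δ * C) * θ ≤ (32 + 48 * x) * θ := by nlinarith [h1, h2]
    have h4 : Δ * C ≤ 32 + 48 * x := le_of_mul_le_mul_right h3 hθ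
    linarith
end

section
/- Let a_t be a sequence with a_{t₀} ≤ 1 and satisfying a_t ≤ a_{t−1} − c·a_{t−1}²/√t for all t > t₀, where 0 < a_t ≤ 1 is nonincreasing and c√t₀ ≤ 1/2 (so the map z ↦ z − cz²/√t is increasing on [0,1]). Then for all t ≥ t₀, a_t ≤ (1 + c(√t − √t₀))⁻¹. -/
lemma mono_map_aux (c s x y : ℝ) (hc : 0 < c) (hs : 1 ≤ s) (h2c : 2*c ≤ 1)
    (hx0 : 0 ≤ x) (hxy : x ≤ y) (hy1 : y ≤ 1) :
    x - c*x^2/s ≤ y - c*y^2/s := by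
  have hs0 : (0:ℝ) < s := lt_of_lt_of_le one_pos hs
  have key : c*y^2/s - c*x^2/s ≤ y - x := by
    rw [← sub_div, div_le_iff₀ hs0]
    nlinarith [mul_nonneg (sub_nonneg.mpr hxy) (show 0 ≤ s - c*(x+y) by nlinarith)]
  linarith

lemma ode_step_aux (c s r A B : ℝ) (hc : 0 < c) (hr : 0 ≤ r) (hrs : r ≤ s)
    (hs0 : 0 < s) (hA0 : 0 < A) (hB0 : 0 < B)
    (hs2 : s^2 = r^2 + 1) (hBA : B = A + c*(s-r)) :
    A⁻¹ - c * A⁻¹ ^ 2 / s ≤ B⁻¹ := by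
  have heq : A⁻¹ - c * A⁻¹ ^ 2 / s = (A*s - c)/(A^2*s) := by
    field_simp
  rw [heq, inv_eq_one_div, div_le_div_iff₀ (by positivity) hB0, hBA]
  nlinarith [mul_nonneg (mul_nonneg (mul_nonneg hc.le hA0.le) hr) (sub_nonneg.mpr hrs),
    mul_nonneg (mul_nonneg hc.le hc.le) (sub_nonneg.mpr hrs),
    mul_nonneg hc.le hA0.le, hs2]

/-- Discrete recursion `a_t ≤ a_{t−1} − c·a_{t−1}²/√t` dominated by the ODE solution:
`a_t ≤ (1 + c(√t − √t₀))⁻¹` for all `t ≥ t₀`. -/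
theorem stmt12 (t₀ : ℕ) (ht₀ : 1 ≤ t₀) (c : ℝ) (hc : 0 < c)
    (a : ℕ → ℝ) (ha0 : a t₀ ≤ 1)
    (hpos : ∀ t, 0 < a t) (hub : ∀ t, a t ≤ 1)
    (hmono : ∀ s t : ℕ, s ≤ t → a t ≤ a s)
    (hrec : ∀ t : ℕ, t₀ < t → a t ≤ a (t - 1) - c * a (t - 1) ^ 2 / Real.sqrt t)
    (hsmall : c * Real.sqrt t₀ ≤ 1 / 2) :
    ∀ t : ℕ, t₀ ≤ t → a t ≤ (1 + c * (Real.sqrt t - Real.sqrt t₀))⁻¹ := by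
  have h1t₀ : (1:ℝ) ≤ Real.sqrt t₀ := by
    rw [show (1:ℝ) = Real.sqrt 1 by simp]
    exact Real.sqrt_le_sqrt (by exact_mod_cast ht₀)
  have h2c : 2*c ≤ 1 := by nlinarith
  intro t ht
  induction t, ht using Nat.le_induction with
  | base => simpa using ha0
  | succ t ht ih =>
    set rt₀ := Real.sqrt t₀ with hrt₀def
    set r := Real.sqrt t with hrdef
    set s := Real.sqrt ((t:ℝ)+1) with hsdef
    have hcast : ((t+1 : ℕ):ℝ) = (t:ℝ)+1 := by push_cast; ring
    have hr0 : rt₀ ≤ r := Real.sqrt_le_sqrt (by exact_mod_cast ht)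
    have hrs : r ≤ s := Real.sqrt_le_sqrt (by linarith)
    have hrnn : 0 ≤ r := Real.sqrt_nonneg _
    have hs1 : 1 ≤ s := by
      rw [show (1:ℝ) = Real.sqrt 1 by simp]
      exact Real.sqrt_le_sqrt (by have : (0:ℝ) ≤ (t:ℝ) := Nat.cast_nonneg t; linarith)
    have hs0 : (0:ℝ) < s := lt_of_lt_of_le one_pos hs1
    have hsq : (s - r)*(s + r) = 1 := by
      have h1 : s^2 = (t:ℝ)+1 := Real.sq_sqrt (by positivity)
      have h2 : r^2 = (t:ℝ) := Real.sq_sqrt (by positivity)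
      nlinarith
    set A := 1 + c*(r - rt₀) with hAdef
    set B := 1 + c*(s - rt₀) with hBdef
    have hA1 : 1 ≤ A := by nlinarith
    have hA0 : 0 < A := lt_of_lt_of_le one_pos hA1
    have hAB : A ≤ B := by nlinarith
    have hB0 : 0 < B := lt_of_lt_of_le hA0 hAB
    have hAinv1 : A⁻¹ ≤ 1 := inv_le_one_of_one_le₀ hA1
    have hAinv0 : 0 < A⁻¹ := inv_pos.mpr hA0
    -- step 1: recursion
    have step1 : a (t+1) ≤ a t - c * a t ^ 2 / s := by
      have h := hrec (t+1) (by omega)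
      simpa [Nat.add_sub_cancel, hcast, ← hsdef] using h
    -- step 2: monotonicity of the map
    have step2 : a t - c * a t ^ 2 / s ≤ A⁻¹ - c * A⁻¹ ^ 2 / s :=
      mono_map_aux c s (a t) A⁻¹ hc hs1 h2c (le_of_lt (hpos t)) ih hAinv1
    -- step 3: ODE step
    have step3 : A⁻¹ - c * A⁻¹ ^ 2 / s ≤ B⁻¹ :=
      ode_step_aux c s r A B hc hrnn hrs hs0 hA0 hB0
        (by linear_combination hsq) (by rw [hAdef, hBdef]; ring)
    have : a (t+1) ≤ B⁻¹ := le_trans step1 (le_trans step2 step3)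
    simpa [hcast, ← hsdef, ← hBdef] using this
end
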